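/- Assume the basis pursuit problem has a unique solution x*, i.e. {x ∈ M : ‖x‖₁ = r̄} = {x*}. Then the sequences (x^k) and (z^k) generated by the BP-MAP algorithm both converge to x*. -/

import Mathlib

open Filter Topology

/-- The ℓ¹-norm on ℝⁿ. -/
noncomputable def norm1 {n : ℕ} (x : EuclideanSpace ℝ (Fin n)) : ℝ := ∑ i, |x i|

lemma norm1_nonneg {n : ℕ} (x : EuclideanSpace ℝ (Fin n)) : 0 ≤ norm1 x :=
  Finset.sum_nonneg fun _ _ => abs_nonneg _

lemma norm1_continuous {n : ℕ} : Continuous (norm1 (n := n)) := by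
  unfold norm1
  exact continuous_finset_sum _ fun i _ =>
    ((EuclideanSpace.proj (𝕜 := ℝ) i).continuous).abs

lemma norm_le_norm1 {n : ℕ} (x : EuclideanSpace ℝ (Fin n)) : ‖x‖ ≤ norm1 x := by
  rw [EuclideanSpace.norm_eq]
  have h1 : ∑ i, ‖x i‖ ^ 2 ≤ (norm1 x) ^ 2 := by
    have := Finset.sum_sq_le_sq_sum_of_nonneg (s := Finset.univ)
      (f := fun i => |x i|) (fun i _ => abs_nonneg _)
    simpa [norm1, Real.norm_eq_abs] using this
  calc Real.sqrt (∑ i, ‖x i‖ ^ 2) ≤ Real.sqrt ((norm1 x) ^ 2) := Real.sqrt_le_sqrt h1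
    _ = norm1 x := Real.sqrt_sq (norm1_nonneg x)

lemma norm1_smul {n : ℕ} {c : ℝ} (hc : 0 ≤ c) (x : EuclideanSpace ℝ (Fin n)) :
    norm1 (c • x) = c * norm1 x := by
  unfold norm1
  rw [Finset.mul_sum]
  refine Finset.sum_congr rfl fun i _ => ?_
  simp [PiLp.smul_apply, abs_mul, abs_of_nonneg hc, smul_eq_mul]

lemma eq_zero_of_norm1_eq_zero {n : ℕ} {x : EuclideanSpace ℝ (Fin n)}
    (h : norm1 x = 0) : x = 0 := by
  have h0 : ∀ i ∈ Finset.univ, |x i| = 0 :=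
    (Finset.sum_eq_zero_iff_of_nonneg (fun i _ => abs_nonneg (x i))).mp h
  ext i
  simpa using abs_eq_zero.mp (h0 i (Finset.mem_univ i))

/-- If (BP) has a unique solution x*, then (x^k) and (z^k) both converge to x*. -/
theorem bpmap_converges_unique_solution {n m : ℕ} (hn : 1 ≤ n)
    (A : Matrix (Fin m) (Fin n) ℝ) (b : Fin m → ℝ)
    (M : Set (EuclideanSpace ℝ (Fin n)))
    (hM : M = {x | A.mulVec (WithLp.ofLp x) = b})
    (hMne : M.Nonempty)
    (rbar : ℝ) (hrbar : rbar = sInf (norm1 '' M))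
    (r : ℕ → ℝ) (z x : ℕ → EuclideanSpace ℝ (Fin n))
    (hr0 : r 0 = 0) (hz0 : z 0 = 0)
    (hxM : ∀ k, x k ∈ M)
    (hzB : ∀ k, norm1 (z k) ≤ r k)
    (hbap : ∀ k, ∀ y ∈ M, ∀ w : EuclideanSpace ℝ (Fin n),
      norm1 w ≤ r k → dist (z k) (x k) ≤ dist w y)
    (hrrec : ∀ k, r (k + 1) = r k + dist (z k) (x k))
    (xstar : EuclideanSpace ℝ (Fin n))
    (hunique : {u ∈ M | norm1 u = rbar} = {xstar}) :
    Tendsto x atTop (𝓝 xstar) ∧ Tendsto z atTop (𝓝 xstar) := by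
  -- basic facts about xstar and rbar
  have hxs : xstar ∈ M ∧ norm1 xstar = rbar := by
    have hmem : xstar ∈ {u ∈ M | norm1 u = rbar} := by
      rw [hunique]; exact Set.mem_singleton _
    exact ⟨hmem.1, hmem.2⟩
  have hrbar_nonneg : 0 ≤ rbar := hxs.2 ▸ norm1_nonneg xstar
  have hbdd : BddBelow (norm1 '' M) := by
    refine ⟨0, ?_⟩
    rintro v ⟨u, _, rfl⟩
    exact norm1_nonneg u
  have hrbar_le : ∀ u ∈ M, rbar ≤ norm1 u := fun u hu =>
    hrbar ▸ csInf_le hbdd ⟨u, hu, rfl⟩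
  -- key geometric fact
  have key : ∀ s : ℝ, 0 ≤ s → s ≤ rbar →
      ∃ w : EuclideanSpace ℝ (Fin n), norm1 w ≤ s ∧ dist w xstar ≤ rbar - s := by
    intro s hs0 hsr
    by_cases hr : rbar = 0
    · have hx0 : xstar = 0 := eq_zero_of_norm1_eq_zero (by rw [hxs.2, hr])
      refine ⟨0, ?_, ?_⟩
      · have : norm1 (0 : EuclideanSpace ℝ (Fin n)) = 0 := by
          simp [norm1]
        linarith
      · rw [hx0]
        simp only [dist_self]
        linarith
    · have hrpos : 0 < rbar := lt_of_le_of_ne hrbar_nonneg (Ne.symm hr)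
      set c := s / rbar with hc
      have hc0 : 0 ≤ c := div_nonneg hs0 hrbar_nonneg
      have hc1 : c ≤ 1 := (div_le_one hrpos).mpr hsr
      have hcr : c * rbar = s := div_mul_cancel₀ s (ne_of_gt hrpos)
      refine ⟨c • xstar, ?_, ?_⟩
      · rw [norm1_smul hc0, hxs.2, hcr]
      · have heq : dist (c • xstar) xstar = (1 - c) * ‖xstar‖ := by
          rw [dist_eq_norm]
          have h2 : c • xstar - xstar = (c - 1) • xstar := by
            rw [sub_smul, one_smul]
          rw [h2, norm_smul, Real.norm_eq_abs, abs_of_nonpos (by linarith : c - 1 ≤ 0)]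
          ring
        rw [heq]
        have h2 : ‖xstar‖ ≤ rbar := hxs.2 ▸ norm_le_norm1 xstar
        nlinarith [norm_nonneg xstar]
  -- r k stays in [0, rbar]
  have hrk : ∀ k, 0 ≤ r k ∧ r k ≤ rbar := by
    intro k
    induction k with
    | zero => exact ⟨le_of_eq hr0.symm, hr0 ▸ hrbar_nonneg⟩
    | succ k ih =>
      obtain ⟨w, hw1, hw2⟩ := key (r k) ih.1 ih.2
      have hd2 : dist (z k) (x k) ≤ rbar - r k :=
        le_trans (hbap k xstar hxs.1 w hw1) hw2
      have hdn : 0 ≤ dist (z k) (x k) := dist_nonneg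
      constructor
      · rw [hrrec k]; linarith [ih.1]
      · rw [hrrec k]; linarith
  have hdk : ∀ k, dist (z k) (x k) ≤ rbar - r k := fun k => by
    obtain ⟨w, hw1, hw2⟩ := key (r k) (hrk k).1 (hrk k).2
    exact le_trans (hbap k xstar hxs.1 w hw1) hw2
  have hmono : Monotone r := monotone_nat_of_le_succ fun k => by
    rw [hrrec k]; linarith [dist_nonneg (x := z k) (y := x k)]
  -- r converges, hence dist (z k) (x k) → 0
  obtain ⟨L, hL⟩ : ∃ L, Tendsto r atTop (𝓝 L) :=
    ⟨_, tendsto_atTop_ciSup hmono ⟨rbar, by rintro v ⟨k, rfl⟩; exact (hrk k).2⟩⟩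
  have hd0 : Tendsto (fun k => dist (z k) (x k)) atTop (𝓝 0) := by
    have h1 : Tendsto (fun k => r (k + 1) - r k) atTop (𝓝 (L - L)) :=
      (hL.comp (tendsto_add_atTop_nat 1)).sub hL
    rw [sub_self] at h1
    exact h1.congr fun k => by rw [hrrec k]; ring
  -- boundedness of x k
  have hball : ∀ k, x k ∈ Metric.closedBall (0 : EuclideanSpace ℝ (Fin n)) (2 * rbar) := by
    intro k
    rw [Metric.mem_closedBall, dist_zero_right]
    have h1 : ‖x k‖ ≤ ‖z k‖ + dist (z k) (x k) := by
      have := dist_triangle (x k) (z k) 0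
      simp only [dist_zero_right] at this
      rw [dist_comm (x k) (z k)] at this
      linarith
    have h2 : ‖z k‖ ≤ rbar := le_trans (norm_le_norm1 _) (le_trans (hzB k) (hrk k).2)
    have h3 := hdk k
    have h4 := (hrk k).1
    linarith
  -- M is closed
  have hMclosed : IsClosed M := by
    rw [hM]
    have hcont : Continuous fun v : EuclideanSpace ℝ (Fin n) => A.mulVec (WithLp.ofLp v) := by
      apply continuous_pi
      intro i
      simp only [Matrix.mulVec, dotProduct]
      exact continuous_finset_sum _ fun j _ =>
        (continuous_const.mul (EuclideanSpace.proj (𝕜 := ℝ) j).continuous)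
    exact isClosed_singleton.preimage hcont
  -- main convergence
  have hx_tend : Tendsto x atTop (𝓝 xstar) := by
    apply tendsto_of_subseq_tendsto
    intro ns hns
    obtain ⟨a, -, φ, hφ, ha⟩ :=
      (isCompact_closedBall (0 : EuclideanSpace ℝ (Fin n)) (2 * rbar)).tendsto_subseq
        (x := fun k => x (ns k)) (fun k => hball (ns k))
    have hns' : Tendsto (fun k => ns (φ k)) atTop atTop := hns.comp hφ.tendsto_atTop
    have hdsub : Tendsto (fun k => dist (z (ns (φ k))) (x (ns (φ k)))) atTop (𝓝 0) :=
      hd0.comp hns'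
    have ha' : Tendsto (fun k => x (ns (φ k))) atTop (𝓝 a) := ha
    have hz_tend : Tendsto (fun k => z (ns (φ k))) atTop (𝓝 a) := by
      rw [tendsto_iff_dist_tendsto_zero]
      have hbound : ∀ k, dist (z (ns (φ k))) a ≤
          dist (z (ns (φ k))) (x (ns (φ k))) + dist (x (ns (φ k))) a :=
        fun k => dist_triangle _ _ _
      have hsum : Tendsto (fun k => dist (z (ns (φ k))) (x (ns (φ k))) +
          dist (x (ns (φ k))) a) atTop (𝓝 0) := by
        have := hdsub.add (tendsto_iff_dist_tendsto_zero.mp ha')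
        simpa using this
      exact squeeze_zero (fun k => dist_nonneg) hbound hsum
    have haM : a ∈ M := hMclosed.mem_of_tendsto ha' (Eventually.of_forall fun k => hxM _)
    have h1 : norm1 a ≤ rbar := by
      have hcn : Tendsto (fun k => norm1 (z (ns (φ k)))) atTop (𝓝 (norm1 a)) :=
        (norm1_continuous.tendsto a).comp hz_tend
      exact le_of_tendsto hcn (Eventually.of_forall fun k =>
        le_trans (hzB _) (hrk _).2)
    have haxs : a = xstar := by
      have hmem : a ∈ {u ∈ M | norm1 u = rbar} :=
        ⟨haM, le_antisymm h1 (hrbar_le a haM)⟩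
      rwa [hunique, Set.mem_singleton_iff] at hmem
    exact ⟨φ, haxs ▸ ha'⟩
  have hz_tend : Tendsto z atTop (𝓝 xstar) := by
    rw [tendsto_iff_dist_tendsto_zero]
    have hbound : ∀ k, dist (z k) xstar ≤ dist (z k) (x k) + dist (x k) xstar :=
      fun k => dist_triangle _ _ _
    have hsum : Tendsto (fun k => dist (z k) (x k) + dist (x k) xstar) atTop (𝓝 0) := by
      have := hd0.add (tendsto_iff_dist_tendsto_zero.mp hx_tend)
      simpa using this
    exact squeeze_zero (fun k => dist_nonneg) hbound hsum
  exact ⟨hx_tend, hz_tend⟩
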